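/- Let c < d and b ∈ L∞(c,d) with ‖b‖_{L∞(c,d)} ≤ π²/(4(d-c)²) and b not a.e. equal to π²/(4(d-c)²) on (c,d). Then the only solution of u'' + bu = 0 on (c,d) with u'(c) = 0, u(d) = 0 is the trivial one, and likewise for the boundary conditions u(c) = 0, u'(d) = 0. -/

import Mathlib

/-!
Write `u' = v`, `v' = -b u` and compare `u` with `w = cos (L (x - c))` (resp. `sin (L (x - c))`),
`L = π / (2 (d - c))`: it solves `w'' + L² w = 0`, satisfies the same boundary conditions and is
positive on `(c, d)`. The Wronskian `W = v w - u w'` vanishes at both ends and `W' = (L² - b) u w`.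
Uniqueness for the initial value problem (Grönwall) lets us assume `u > 0` just right of `c`.
As long as `u ≥ 0`, `W ≥ 0`, so `(u / w)' = W / w² ≥ 0` and `u` cannot reach a zero inside `(c, d)`.
Hence `0 = W d - W c = ∫ (L² - b) u w` with `u w > 0`, forcing `b = L²` almost everywhere.

The hypotheses are the integral equations only, whose `∫ b u` is junk unless `b u` is
integrable; a Grönwall bound on every interval where it is integrable shows that it is.
-/

open MeasureTheory Real Set intervalIntegral Topology Filter

theorem le_mul_exp_of_le_add_mul_integral {φ : ℝ → ℝ} {a b C K : ℝ} (hK : 0 ≤ K)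
    (hφ : ContinuousOn φ (Icc a b)) (h : ∀ t ∈ Icc a b, φ t ≤ C + K * ∫ s in a..t, φ s) :
    ∀ t ∈ Icc a b, φ t ≤ C * exp (K * (t - a)) := by
  set ψ : ℝ → ℝ := fun t => C + K * ∫ s in a..t, φ s
  have hψ_cont : ContinuousOn ψ (Icc a b) := by
    rcases le_or_gt a b with hab | hba
    · have := continuousOn_primitive_interval'
        (hφ.intervalIntegrable_of_Icc (μ := volume) hab) left_mem_uIcc
      rw [uIcc_of_le hab] at this
      exact continuousOn_const.add (continuousOn_const.mul this)
    · simp [Icc_eq_empty_of_lt hba]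
  have hψ_deriv : ∀ x ∈ Ico a b, HasDerivWithinAt ψ (K * φ x) (Ici x) x := by
    intro x hx
    have hIcc : Icc a b ∈ 𝓝[>] x := Icc_mem_nhdsGT_of_mem hx
    have hint : IntervalIntegrable φ volume a x :=
      (hφ.mono (Icc_subset_Icc_right hx.2.le)).intervalIntegrable_of_Icc hx.1
    exact ((integral_hasDerivWithinAt_right hint
      ((hφ.stronglyMeasurableAtFilter_nhdsWithin measurableSet_Icc x).filter_mono
        (nhdsWithin_le_of_mem hIcc))
      ((hφ x (Ico_subset_Icc_self hx)).mono_of_mem_nhdsWithin hIcc)).const_mul K).const_add C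
  have hψ_le := le_gronwallBound_of_liminf_deriv_right_le (δ := C) (K := K) (ε := 0) hψ_cont
    (fun x hx r hr => (hψ_deriv x hx).liminf_right_slope_le hr) (by simp [ψ])
    (fun x hx => by simpa using mul_le_mul_of_nonneg_left (h x (Ico_subset_Icc_self hx)) hK)
  intro t ht
  calc φ t ≤ ψ t := h t ht
    _ ≤ gronwallBound C K 0 (t - a) := hψ_le t ht
    _ = C * exp (K * (t - a)) := gronwallBound_ε0 _ _ _

theorem exists_eq_zero_and_forall_nonneg {f : ℝ → ℝ} {a b : ℝ} (hab : a ≤ b)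
    (hf : ContinuousOn f (Icc a b)) (ha : 0 ≤ f a) (hb : f b ≤ 0) :
    ∃ x ∈ Icc a b, f x = 0 ∧ ∀ t ∈ Icc a x, 0 ≤ f t := by
  set Z := Icc a b ∩ f ⁻¹' {0}
  have hZ_closed : IsClosed Z := hf.preimage_isClosed_of_isClosed isClosed_Icc isClosed_singleton
  have hZ_bdd : BddBelow Z := ⟨a, fun x hx => hx.1.1⟩
  have zero_le_of_lt : ∀ t ∈ Icc a b, f t < 0 → ∃ z ∈ Z, z ≤ t := by
    intro t ht hft
    obtain ⟨z, hz, hfz⟩ := intermediate_value_Icc' ht.1 (hf.mono (Icc_subset_Icc_right ht.2))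
      ⟨hft.le, ha⟩
    exact ⟨z, ⟨⟨hz.1, hz.2.trans ht.2⟩, hfz⟩, hz.2⟩
  have hZ_ne : Z.Nonempty := by
    rcases hb.lt_or_eq with hb | hb
    · obtain ⟨z, hz, -⟩ := zero_le_of_lt b (right_mem_Icc.2 hab) hb
      exact ⟨z, hz⟩
    · exact ⟨b, right_mem_Icc.2 hab, hb⟩
  obtain ⟨hx, hfx⟩ := hZ_closed.csInf_mem hZ_ne hZ_bdd
  refine ⟨sInf Z, hx, hfx, fun t ht => not_lt.1 fun hft => ?_⟩
  obtain ⟨z, hz, hzt⟩ := zero_le_of_lt t ⟨ht.1, ht.2.trans hx.2⟩ hft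
  have : t = z := le_antisymm ((ht.2.trans (csInf_le hZ_bdd hz))) hzt
  exact hft.ne (this ▸ hz.2)

theorem exists_forall_Icc_pos_of_pos {f : ℝ → ℝ} {c d : ℝ} (hcd : c < d)
    (hf : ContinuousOn f (Icc c d)) (hc : 0 < f c) :
    ∃ e ∈ Ioo c d, ∀ x ∈ Icc c e, 0 < f x := by
  have hev : ∀ᶠ x in 𝓝[≥] c, 0 < f x := by
    have := (hf c (left_mem_Icc.2 hcd.le)).eventually (lt_mem_nhds hc)
    rwa [nhdsWithin_Icc_eq_nhdsGE hcd] at this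
  obtain ⟨e', he', hsub⟩ := (mem_nhdsGE_iff_exists_mem_Ioc_Ico_subset hcd).1 hev
  refine ⟨(c + e') / 2, ⟨by linarith [he'.1], by linarith [he'.2]⟩, fun x hx => hsub ⟨hx.1, ?_⟩⟩
  linarith [hx.2, he'.1]

theorem monotoneOn_div_of_deriv_mul_sub_mul_nonneg {f g f' g' : ℝ → ℝ} {a b : ℝ}
    (hf : ContinuousOn f (Icc a b)) (hg : ContinuousOn g (Icc a b))
    (hf' : ∀ x ∈ Ioo a b, HasDerivAt f (f' x) x) (hg' : ∀ x ∈ Ioo a b, HasDerivAt g (g' x) x)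
    (hg_pos : ∀ x ∈ Icc a b, 0 < g x) (hW : ∀ x ∈ Ioo a b, 0 ≤ f' x * g x - f x * g' x) :
    MonotoneOn (fun x => f x / g x) (Icc a b) := by
  refine monotoneOn_of_hasDerivWithinAt_nonneg (convex_Icc a b)
    (hf.div hg fun x hx => (hg_pos x hx).ne') (f' := fun x => (f' x * g x - f x * g' x) / g x ^ 2)
    (fun x hx => ?_) (fun x hx => ?_) <;> rw [interior_Icc] at hx
  · exact ((hf' x hx).div (hg' x hx) (hg_pos x (Ioo_subset_Icc_self hx)).ne').hasDerivWithinAt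
  · exact div_nonneg (hW x hx) (sq_nonneg _)

theorem ae_restrict_Icc_of_ae_restrict_Ioo {P : ℝ → Prop} {c d p q : ℝ} (hcp : c ≤ p)
    (hqd : q ≤ d) (h : ∀ᵐ x ∂(volume.restrict (Ioo c d)), P x) :
    ∀ᵐ x ∂(volume.restrict (Icc p q)), P x := by
  rw [← Measure.restrict_congr_set Ioo_ae_eq_Icc]
  exact ae_restrict_of_ae_restrict_of_subset (Ioo_subset_Ioo hcp hqd) h

theorem ae_eq_zero_of_integral_mul_eq_zero {f g : ℝ → ℝ} {c d : ℝ} (hcd : c ≤ d)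
    (hf : ∀ᵐ t ∂(volume.restrict (Ioo c d)), 0 ≤ f t) (hg : ∀ t ∈ Ioo c d, 0 < g t)
    (hfg : IntervalIntegrable (fun t => f t * g t) volume c d)
    (h : ∫ t in c..d, f t * g t = 0) : ∀ᵐ t ∂(volume.restrict (Ioo c d)), f t = 0 := by
  have hμ : volume.restrict (Ioc c d ∪ Ioc d c) = volume.restrict (Ioo c d) := by
    rw [Ioc_eq_empty (not_lt.2 hcd), union_empty, Measure.restrict_congr_set Ioo_ae_eq_Ioc]
  have hnonneg : 0 ≤ᵐ[volume.restrict (Ioc c d ∪ Ioc d c)] fun t => f t * g t := by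
    rw [hμ]
    filter_upwards [hf, ae_restrict_mem measurableSet_Ioo] with t hft ht
    exact mul_nonneg hft (hg t ht).le
  rw [integral_eq_zero_iff_of_nonneg_ae hnonneg hfg, hμ] at h
  filter_upwards [h, ae_restrict_mem measurableSet_Ioo] with t ht htm
  exact (mul_eq_zero.1 ht).resolve_right (hg t htm).ne'

theorem mul_sub_mem_Icc_of_mem_Icc {c d x : ℝ} (hcd : c < d) (hx : x ∈ Icc c d) :
    π / (2 * (d - c)) * (x - c) ∈ Icc 0 (π / 2) := by
  have hdc : 0 < d - c := sub_pos.2 hcd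
  rw [show π / (2 * (d - c)) * (x - c) = π / 2 * ((x - c) / (d - c)) by field_simp]
  exact ⟨mul_nonneg (by positivity) (div_nonneg (sub_nonneg.2 hx.1) hdc.le),
    mul_le_of_le_one_right (by positivity) ((div_le_one hdc).2 (by linarith [hx.2]))⟩

theorem mul_sub_mem_Ioo_of_mem_Ioo {c d x : ℝ} (hcd : c < d) (hx : x ∈ Ioo c d) :
    π / (2 * (d - c)) * (x - c) ∈ Ioo 0 (π / 2) := by
  have hdc : 0 < d - c := sub_pos.2 hcd
  rw [show π / (2 * (d - c)) * (x - c) = π / 2 * ((x - c) / (d - c)) by field_simp]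
  exact ⟨mul_pos (by positivity) (div_pos (sub_pos.2 hx.1) hdc),
    mul_lt_of_lt_one_right (by positivity) ((div_lt_one hdc).2 (by linarith [hx.2]))⟩

theorem AbsolutelyContinuousOnInterval.congr {f g : ℝ → ℝ} {a b : ℝ}
    (hf : AbsolutelyContinuousOnInterval f a b) (hfg : EqOn f g (uIcc a b)) :
    AbsolutelyContinuousOnInterval g a b := by
  refine Tendsto.congr' ?_ hf
  filter_upwards [mem_inf_of_right (mem_principal_self _)] with E hE
  exact Finset.sum_congr rfl fun i hi => by rw [hfg (hE.1 i hi).1, hfg (hE.1 i hi).2]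

theorem AbsolutelyContinuousOnInterval.integral_eq_sub_of_ae_hasDerivAt {F f : ℝ → ℝ} {a b : ℝ}
    (hab : a ≤ b) (hF : AbsolutelyContinuousOnInterval F a b)
    (hf : ∀ᵐ x, x ∈ Ioo a b → HasDerivAt F (f x) x) :
    ∫ x in a..b, f x = F b - F a := by
  rw [← hF.integral_deriv_eq_sub]
  refine integral_congr_ae ?_
  filter_upwards [hf, (Ioo_ae_eq_Ioc (μ := volume) (a := a) (b := b)).mem_iff] with x hx hmem hx'
  rw [uIoc_of_le hab] at hx'
  exact (hx (hmem.2 hx')).deriv.symm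

theorem AbsolutelyContinuousOnInterval.of_hasDerivAt {w w' : ℝ → ℝ}
    (hw : ∀ x, HasDerivAt w (w' x) x) (hw' : Continuous w') (a b : ℝ) :
    AbsolutelyContinuousOnInterval w a b := by
  have hderiv : deriv w = w' := funext fun x => (hw x).deriv
  have : ContDiff ℝ 1 w :=
    contDiff_one_iff_deriv.2 ⟨fun x => (hw x).differentiableAt, hderiv ▸ hw'⟩
  exact this.contDiffOn.absolutelyContinuousOnInterval

section Primitive

variable {F f : ℝ → ℝ} {c d : ℝ}

theorem continuousOn_of_eq_add_integral (hcd : c ≤ d) (hf : IntervalIntegrable f volume c d)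
    (hF : ∀ x ∈ Icc c d, F x = F c + ∫ t in c..x, f t) : ContinuousOn F (Icc c d) := by
  have := continuousOn_primitive_interval' hf left_mem_uIcc
  rw [uIcc_of_le hcd] at this
  exact (continuousOn_const.add this).congr hF

theorem hasDerivAt_of_eq_add_integral (hf : ContinuousOn f (Icc c d))
    (hF : ∀ x ∈ Icc c d, F x = F c + ∫ t in c..x, f t) :
    ∀ x ∈ Ioo c d, HasDerivAt F (f x) x := by
  intro x hx
  have hint : IntervalIntegrable f volume c x :=
    (hf.mono (Icc_subset_Icc_right hx.2.le)).intervalIntegrable_of_Icc hx.1.le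
  have hderiv := (integral_hasDerivAt_right hint
    ((hf.mono Ioo_subset_Icc_self).stronglyMeasurableAtFilter isOpen_Ioo x hx)
    (hf.continuousAt (Icc_mem_nhds hx.1 hx.2))).const_add (F c)
  exact hderiv.congr_of_eventuallyEq <|
    Filter.eventuallyEq_of_mem (Icc_mem_nhds hx.1 hx.2) hF

theorem ae_hasDerivAt_of_eq_add_integral (hf : IntervalIntegrable f volume c d)
    (hF : ∀ x ∈ Icc c d, F x = F c + ∫ t in c..x, f t) :
    ∀ᵐ x, x ∈ Ioo c d → HasDerivAt F (f x) x := by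
  filter_upwards [hf.ae_hasDerivAt_integral] with x hx hx'
  have hderiv :=
    (hx (Ioo_subset_Icc_self.trans Icc_subset_uIcc hx') c left_mem_uIcc).const_add (F c)
  exact hderiv.congr_of_eventuallyEq <|
    Filter.eventuallyEq_of_mem (Icc_mem_nhds hx'.1 hx'.2) hF

theorem absolutelyContinuousOnInterval_of_eq_add_integral (hcd : c ≤ d)
    (hf : IntervalIntegrable f volume c d)
    (hF : ∀ x ∈ Icc c d, F x = F c + ∫ t in c..x, f t) : AbsolutelyContinuousOnInterval F c d := by
  refine AbsolutelyContinuousOnInterval.congr ?_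
    fun x hx => (hF x (by rwa [uIcc_of_le hcd] at hx)).symm
  simpa only [AbsolutelyContinuousOnInterval, dist_add_left] using
    hf.absolutelyContinuousOnInterval_intervalIntegral left_mem_uIcc

end Primitive

theorem intervalIntegrable_mul_of_bounded {b u : ℝ → ℝ} {c x d M C : ℝ} (hcx : c ≤ x)
    (hxd : x ≤ d) (hmeas : AEStronglyMeasurable b (volume.restrict (Ioo c d)))
    (hb : ∀ᵐ t ∂(volume.restrict (Ioo c d)), |b t| ≤ M)
    (hu_meas : AEStronglyMeasurable u (volume.restrict (Ioc c x)))
    (hu_bdd : ∀ t ∈ Ioc c x, |u t| ≤ C) :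
    IntervalIntegrable (fun t => b t * u t) volume c x := by
  have hsub : Ioo c x ⊆ Ioo c d := Ioo_subset_Ioo_right hxd
  rw [intervalIntegrable_iff_integrableOn_Ioc_of_le hcx, integrableOn_Ioc_iff_integrableOn_Ioo]
  refine Integrable.of_bound ((hmeas.mono_set hsub).mul (hu_meas.mono_set Ioo_subset_Ioc_self))
    (M * C) ?_
  filter_upwards [ae_restrict_of_ae_restrict_of_subset hsub hb, ae_restrict_mem measurableSet_Ioo]
    with t hbt ht
  rw [Real.norm_eq_abs, abs_mul]
  exact mul_le_mul hbt (hu_bdd t (Ioo_subset_Ioc_self ht)) (abs_nonneg _)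
    ((abs_nonneg _).trans hbt)

theorem intervalIntegrable_mul_of_continuousOn {b u : ℝ → ℝ} {c x d M : ℝ} (hcx : c ≤ x)
    (hxd : x ≤ d) (hmeas : AEStronglyMeasurable b (volume.restrict (Ioo c d)))
    (hb : ∀ᵐ t ∂(volume.restrict (Ioo c d)), |b t| ≤ M) (hu : ContinuousOn u (Icc c x)) :
    IntervalIntegrable (fun t => b t * u t) volume c x := by
  obtain ⟨C, hC⟩ := isCompact_Icc.exists_bound_of_continuousOn hu
  exact intervalIntegrable_mul_of_bounded hcx hxd hmeas hb
    ((hu.mono Ioc_subset_Icc_self).aestronglyMeasurable measurableSet_Ioc)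
    fun t ht => hC t (Ioc_subset_Icc_self ht)

structure IsIntegralSolution (b u v : ℝ → ℝ) (c d : ℝ) : Prop where
  u_eq : ∀ x ∈ Icc c d, u x = u c + ∫ t in c..x, v t
  v_eq : ∀ x ∈ Icc c d, v x = v c - ∫ t in c..x, b t * u t

namespace IsIntegralSolution

variable {b u v w w₁ : ℝ → ℝ} {c d k M : ℝ}

theorem v_eq_add (hs : IsIntegralSolution b u v c d) :
    ∀ x ∈ Icc c d, v x = v c + ∫ t in c..x, -(b t * u t) := by
  intro x hx
  rw [hs.v_eq x hx, intervalIntegral.integral_neg, sub_eq_add_neg]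

theorem mono (hs : IsIntegralSolution b u v c d) {x : ℝ} (hxd : x ≤ d) :
    IsIntegralSolution b u v c x :=
  ⟨fun t ht => hs.u_eq t ⟨ht.1, ht.2.trans hxd⟩, fun t ht => hs.v_eq t ⟨ht.1, ht.2.trans hxd⟩⟩

theorem neg (hs : IsIntegralSolution b u v c d) : IsIntegralSolution b (-u) (-v) c d := by
  refine ⟨fun x hx => ?_, fun x hx => ?_⟩
  · simp only [Pi.neg_apply, intervalIntegral.integral_neg, hs.u_eq x hx]
    ring
  · simp only [Pi.neg_apply, mul_neg, intervalIntegral.integral_neg, hs.v_eq x hx]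
    ring

theorem continuousOn_v (hs : IsIntegralSolution b u v c d) (hcd : c ≤ d)
    (hbu : IntervalIntegrable (fun t => b t * u t) volume c d) : ContinuousOn v (Icc c d) :=
  continuousOn_of_eq_add_integral hcd hbu.neg hs.v_eq_add

theorem continuousOn_u (hs : IsIntegralSolution b u v c d) (hcd : c ≤ d)
    (hbu : IntervalIntegrable (fun t => b t * u t) volume c d) : ContinuousOn u (Icc c d) :=
  continuousOn_of_eq_add_integral hcd ((hs.continuousOn_v hcd hbu).intervalIntegrable_of_Icc hcd)
    hs.u_eq

theorem abs_add_abs_le (hs : IsIntegralSolution b u v c d) (hcd : c ≤ d) (hM : 0 ≤ M)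
    (hb : ∀ᵐ t ∂(volume.restrict (Ioo c d)), |b t| ≤ M)
    (hbu : IntervalIntegrable (fun t => b t * u t) volume c d) :
    ∀ x ∈ Icc c d, |u x| + |v x| ≤ (|u c| + |v c|) * exp ((1 + M) * (x - c)) := by
  have hu := hs.continuousOn_u hcd hbu
  have hv := hs.continuousOn_v hcd hbu
  refine le_mul_exp_of_le_add_mul_integral (by linarith) (hu.abs.add hv.abs) fun x hx => ?_
  have hsub : Icc c x ⊆ Icc c d := Icc_subset_Icc_right hx.2
  have hsub' : uIcc c x ⊆ uIcc c d := by rwa [uIcc_of_le hx.1, uIcc_of_le hcd]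
  have hφ_int : IntervalIntegrable (fun t => |u t| + |v t|) volume c x :=
    ((hu.abs.add hv.abs).mono hsub).intervalIntegrable_of_Icc hx.1
  have hu_le : |u x| ≤ |u c| + ∫ t in c..x, (|u t| + |v t|) := by
    rw [hs.u_eq x hx]
    refine (abs_add_le _ _).trans (add_le_add le_rfl ?_)
    refine (abs_integral_le_integral_abs hx.1).trans ?_
    exact integral_mono_on hx.1 ((hv.mono hsub).intervalIntegrable_of_Icc hx.1).abs hφ_int
      fun t _ => le_add_of_nonneg_left (abs_nonneg _)
  have hv_le : |v x| ≤ |v c| + M * ∫ t in c..x, (|u t| + |v t|) := by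
    rw [hs.v_eq x hx]
    refine (abs_sub _ _).trans (add_le_add le_rfl ?_)
    refine (abs_integral_le_integral_abs hx.1).trans ?_
    rw [← intervalIntegral.integral_const_mul]
    refine integral_mono_ae_restrict hx.1 (hbu.mono_set hsub').abs (hφ_int.const_mul M) ?_
    filter_upwards [ae_restrict_Icc_of_ae_restrict_Ioo le_rfl hx.2 hb] with t hbt
    rw [abs_mul]
    exact mul_le_mul hbt (le_add_of_nonneg_right (abs_nonneg _)) (abs_nonneg _) hM
  linarith

-- The integral of a non-integrable function is `0`: if `b * u` is not integrable on `[c, x]`,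
-- neither is `v` (otherwise `u` would be continuous there), so `u x` falls back to `u c`.
theorem eq_left_of_not_intervalIntegrable (hs : IsIntegralSolution b u v c d)
    (hmeas : AEStronglyMeasurable b (volume.restrict (Ioo c d)))
    (hb : ∀ᵐ t ∂(volume.restrict (Ioo c d)), |b t| ≤ M) {x : ℝ} (hx : x ∈ Icc c d)
    (hbu : ¬ IntervalIntegrable (fun t => b t * u t) volume c x) : u x = u c := by
  by_cases hv : IntervalIntegrable v volume c x
  · exact absurd (intervalIntegrable_mul_of_continuousOn hx.1 hx.2 hmeas hb
      (continuousOn_of_eq_add_integral hx.1 hv (hs.mono hx.2).u_eq)) hbu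
  · rw [hs.u_eq x hx, integral_undef hv, add_zero]

theorem abs_le_max (hs : IsIntegralSolution b u v c d) (hM : 0 ≤ M)
    (hmeas : AEStronglyMeasurable b (volume.restrict (Ioo c d)))
    (hb : ∀ᵐ t ∂(volume.restrict (Ioo c d)), |b t| ≤ M) :
    ∀ x ∈ Icc c d, |u x| ≤ max ((|u c| + |v c|) * exp ((1 + M) * (d - c))) |u c| := by
  intro x hx
  by_cases hbu : IntervalIntegrable (fun t => b t * u t) volume c x
  · refine le_max_of_le_left ?_
    have hb' := ae_restrict_of_ae_restrict_of_subset (Ioo_subset_Ioo_right hx.2) hb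
    have := (hs.mono hx.2).abs_add_abs_le hx.1 hM hb' hbu x (right_mem_Icc.2 hx.1)
    have hexp : exp ((1 + M) * (x - c)) ≤ exp ((1 + M) * (d - c)) :=
      exp_le_exp.2 (mul_le_mul_of_nonneg_left (by linarith [hx.2]) (by linarith))
    nlinarith [abs_nonneg (v x), abs_nonneg (u c), abs_nonneg (v c), exp_pos ((1 + M) * (x - c))]
  · rw [hs.eq_left_of_not_intervalIntegrable hmeas hb hx hbu]
    exact le_max_right _ _

theorem intervalIntegrable_mul (hs : IsIntegralSolution b u v c d) (hcd : c ≤ d) (hM : 0 ≤ M)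
    (hmeas : AEStronglyMeasurable b (volume.restrict (Ioo c d)))
    (hb : ∀ᵐ t ∂(volume.restrict (Ioo c d)), |b t| ≤ M) :
    IntervalIntegrable (fun t => b t * u t) volume c d := by
  set D := {x ∈ Icc c d | IntervalIntegrable (fun t => b t * u t) volume c x}
  have hcD : c ∈ D := ⟨left_mem_Icc.2 hcd, IntervalIntegrable.refl⟩
  have hD_bdd : BddAbove D := ⟨d, fun x hx => hx.1.2⟩
  set s := sSup D
  have hcs : c ≤ s := le_csSup hD_bdd hcD
  have hsd : s ≤ d := csSup_le ⟨c, hcD⟩ fun x hx => hx.1.2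
  have h_cont : ContinuousOn u (Ioo c s) := by
    intro y hy
    obtain ⟨x, hxD, hyx⟩ := exists_lt_of_lt_csSup ⟨c, hcD⟩ hy.2
    have hu := (hs.mono hxD.1.2).continuousOn_u hxD.1.1 hxD.2
    exact (hu.continuousAt (Icc_mem_nhds hy.1 hyx)).continuousWithinAt
  have h_eq : ∀ x ∈ Ioc s d, u x = u c := fun x hx =>
    have hx' : x ∈ Icc c d := ⟨hcs.trans hx.1.le, hx.2⟩
    hs.eq_left_of_not_intervalIntegrable hmeas hb hx' fun hbu =>
      (not_le.2 hx.1) (le_csSup hD_bdd ⟨hx', hbu⟩)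
  have h_meas : AEStronglyMeasurable u (volume.restrict (Ioc c d)) := by
    rw [← Ioc_union_Ioc_eq_Ioc hcs hsd, aestronglyMeasurable_union_iff]
    refine ⟨?_, (aestronglyMeasurable_const (b := u c)).congr ?_⟩
    · rw [← Measure.restrict_congr_set Ioo_ae_eq_Ioc]
      exact h_cont.aestronglyMeasurable measurableSet_Ioo
    · exact (ae_restrict_iff' measurableSet_Ioc).2 (ae_of_all _ fun x hx => (h_eq x hx).symm)
  exact intervalIntegrable_mul_of_bounded hcd le_rfl hmeas hb h_meas
    fun x hx => hs.abs_le_max hM hmeas hb x (Ioc_subset_Icc_self hx)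

theorem eq_zero_of_left_eq_zero (hs : IsIntegralSolution b u v c d) (hcd : c ≤ d) (hM : 0 ≤ M)
    (hmeas : AEStronglyMeasurable b (volume.restrict (Ioo c d)))
    (hb : ∀ᵐ t ∂(volume.restrict (Ioo c d)), |b t| ≤ M) (huc : u c = 0) (hvc : v c = 0) :
    ∀ x ∈ Icc c d, u x = 0 := by
  intro x hx
  have := hs.abs_add_abs_le hcd hM hb (hs.intervalIntegrable_mul hcd hM hmeas hb) x hx
  rw [huc, hvc, abs_zero, add_zero, zero_mul] at this
  exact abs_eq_zero.1 (le_antisymm (by linarith [abs_nonneg (v x)]) (abs_nonneg _))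

theorem wronskian_sub_eq_integral (hs : IsIntegralSolution b u v c d) (hcd : c ≤ d)
    (hbu : IntervalIntegrable (fun t => b t * u t) volume c d)
    (hw : ∀ x, HasDerivAt w (w₁ x) x) (hw₁ : ∀ x, HasDerivAt w₁ (-(k * w x)) x) :
    (v d * w d - u d * w₁ d) - (v c * w c - u c * w₁ c) =
      ∫ t in c..d, (k - b t) * (u t * w t) := by
  have hv := hs.continuousOn_v hcd hbu
  have hv_int := hv.intervalIntegrable_of_Icc (μ := volume) hcd
  have hw_cont : Continuous w := continuous_iff_continuousAt.2 fun x => (hw x).continuousAt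
  have hw₁_cont : Continuous w₁ := continuous_iff_continuousAt.2 fun x => (hw₁ x).continuousAt
  have hW_ac : AbsolutelyContinuousOnInterval (fun x => v x * w x - u x * w₁ x) c d :=
    ((absolutelyContinuousOnInterval_of_eq_add_integral hcd hbu.neg hs.v_eq_add).fun_mul
      (.of_hasDerivAt hw hw₁_cont c d)).fun_sub
    ((absolutelyContinuousOnInterval_of_eq_add_integral hcd hv_int hs.u_eq).fun_mul
      (.of_hasDerivAt hw₁ (continuous_const.mul hw_cont).neg c d))
  refine (hW_ac.integral_eq_sub_of_ae_hasDerivAt hcd ?_).symm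
  filter_upwards [ae_hasDerivAt_of_eq_add_integral hbu.neg hs.v_eq_add] with t hv' ht
  have hu' := hasDerivAt_of_eq_add_integral hv hs.u_eq t ht
  exact (((hv' ht).mul (hw t)).sub (hu'.mul (hw₁ t))).congr_deriv
    (by simp only [Pi.neg_apply]; ring)

theorem wronskian_nonneg (hs : IsIntegralSolution b u v c d)
    (hbu : IntervalIntegrable (fun t => b t * u t) volume c d)
    (hbk : ∀ᵐ t ∂(volume.restrict (Ioo c d)), b t ≤ k)
    (hw : ∀ x, HasDerivAt w (w₁ x) x) (hw₁ : ∀ x, HasDerivAt w₁ (-(k * w x)) x)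
    (hw_nonneg : ∀ x ∈ Icc c d, 0 ≤ w x) (hWc : v c * w c - u c * w₁ c = 0)
    {x : ℝ} (hx : x ∈ Icc c d) (hux : ∀ t ∈ Icc c x, 0 ≤ u t) :
    0 ≤ v x * w x - u x * w₁ x := by
  have hsub : uIcc c x ⊆ uIcc c d := uIcc_subset_uIcc left_mem_uIcc (Icc_subset_uIcc hx)
  have := (hs.mono hx.2).wronskian_sub_eq_integral hx.1 (hbu.mono_set hsub) hw hw₁
  rw [hWc, sub_zero] at this
  rw [this]
  refine integral_nonneg_of_ae_restrict hx.1 ?_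
  filter_upwards [ae_restrict_Icc_of_ae_restrict_Ioo le_rfl hx.2 hbk,
    ae_restrict_mem measurableSet_Icc] with t hbt ht
  exact mul_nonneg (sub_nonneg.2 hbt) (mul_nonneg (hux t ht) (hw_nonneg t ⟨ht.1, ht.2.trans hx.2⟩))

theorem pos_of_wronskian_left_eq_zero (hs : IsIntegralSolution b u v c d) (hcd : c ≤ d)
    (hbu : IntervalIntegrable (fun t => b t * u t) volume c d)
    (hbk : ∀ᵐ t ∂(volume.restrict (Ioo c d)), b t ≤ k)
    (hw : ∀ x, HasDerivAt w (w₁ x) x) (hw₁ : ∀ x, HasDerivAt w₁ (-(k * w x)) x)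
    (hw_nonneg : ∀ x ∈ Icc c d, 0 ≤ w x) (hw_pos : ∀ x ∈ Ioo c d, 0 < w x)
    (hWc : v c * w c - u c * w₁ c = 0) {e : ℝ} (he : e ∈ Ioo c d) (huc : 0 ≤ u c)
    (hue : ∀ x ∈ Ioc c e, 0 < u x) : ∀ x ∈ Ioo c d, 0 < u x := by
  have hu := hs.continuousOn_u hcd hbu
  have hu' := hasDerivAt_of_eq_add_integral (hs.continuousOn_v hcd hbu) hs.u_eq
  have hu_nonneg_e : ∀ x ∈ Icc c e, 0 ≤ u x := fun x hx =>
    hx.1.eq_or_lt.elim (fun h => h ▸ huc) fun h => (hue x ⟨h, hx.2⟩).le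
  -- On `[e, x]` the quotient `u / w` has derivative `W / w ^ 2 ≥ 0`, so `u` cannot reach `0`.
  have hu_pos_of_nonneg : ∀ x ∈ Ico e d, (∀ t ∈ Icc c x, 0 ≤ u t) → 0 < u x := by
    intro x hx hux
    have hw_pos' : ∀ t ∈ Icc e x, 0 < w t := fun t ht =>
      hw_pos t ⟨he.1.trans_le ht.1, ht.2.trans_lt hx.2⟩
    have hmono := monotoneOn_div_of_deriv_mul_sub_mul_nonneg
      (hu.mono (Icc_subset_Icc he.1.le hx.2.le))
      (fun t _ => (hw t).continuousAt.continuousWithinAt)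
      (fun t ht => hu' t ⟨he.1.trans ht.1, ht.2.trans hx.2⟩) (fun t _ => hw t) hw_pos'
      (fun t ht => hs.wronskian_nonneg hbu hbk hw hw₁ hw_nonneg hWc
        ⟨(he.1.trans ht.1).le, (ht.2.trans hx.2).le⟩ fun r hr => hux r ⟨hr.1, hr.2.trans ht.2.le⟩)
      (left_mem_Icc.2 hx.1) (right_mem_Icc.2 hx.1) hx.1
    have hue_div : 0 < u e / w e := div_pos (hue e ⟨he.1, le_rfl⟩) (hw_pos e he)
    exact (div_pos_iff_of_pos_right (hw_pos' x (right_mem_Icc.2 hx.1))).1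
      (hue_div.trans_le hmono)
  intro x hx
  rcases le_or_gt x e with hxe | hex
  · exact hue x ⟨hx.1, hxe⟩
  by_contra! hux
  obtain ⟨z, hz, huz, hz_nonneg⟩ := exists_eq_zero_and_forall_nonneg hex.le
    (hu.mono (Icc_subset_Icc he.1.le hx.2.le)) (hue e ⟨he.1, le_rfl⟩).le hux
  refine (hu_pos_of_nonneg z ⟨hz.1, hz.2.trans_lt hx.2⟩ fun t ht => ?_).ne' huz
  rcases le_total t e with hte | het
  · exact hu_nonneg_e t ⟨ht.1, hte⟩
  · exact hz_nonneg t ⟨het, ht.2⟩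

theorem false_of_wronskian_eq_zero (hs : IsIntegralSolution b u v c d) (hcd : c < d)
    (hbu : IntervalIntegrable (fun t => b t * u t) volume c d)
    (hbk : ∀ᵐ t ∂(volume.restrict (Ioo c d)), b t ≤ k)
    (hnot : ¬ ∀ᵐ t ∂(volume.restrict (Ioo c d)), b t = k)
    (hw : ∀ x, HasDerivAt w (w₁ x) x) (hw₁ : ∀ x, HasDerivAt w₁ (-(k * w x)) x)
    (hw_nonneg : ∀ x ∈ Icc c d, 0 ≤ w x) (hw_pos : ∀ x ∈ Ioo c d, 0 < w x)
    (hWc : v c * w c - u c * w₁ c = 0) (hWd : v d * w d - u d * w₁ d = 0)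
    {e : ℝ} (he : e ∈ Ioo c d) (huc : 0 ≤ u c) (hue : ∀ x ∈ Ioc c e, 0 < u x) : False := by
  have hu_pos := hs.pos_of_wronskian_left_eq_zero hcd.le hbu hbk hw hw₁ hw_nonneg hw_pos hWc he
    huc hue
  have hw_cont : Continuous w := continuous_iff_continuousAt.2 fun x => (hw x).continuousAt
  have hint : IntervalIntegrable (fun t => (k - b t) * (u t * w t)) volume c d := by
    refine ((((hs.continuousOn_u hcd.le hbu).mul hw_cont.continuousOn).intervalIntegrable_of_Icc
      hcd.le).const_mul k).sub (hbu.mul_continuousOn hw_cont.continuousOn) |>.congr ?_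
    exact fun t _ => by simp only [Pi.mul_apply]; ring
  have hzero : ∫ t in c..d, (k - b t) * (u t * w t) = 0 := by
    rw [← hs.wronskian_sub_eq_integral hcd.le hbu hw hw₁, hWc, hWd, sub_zero]
  refine hnot ((ae_eq_zero_of_integral_mul_eq_zero hcd.le (hbk.mono fun t => sub_nonneg.2)
    (fun t ht => mul_pos (hu_pos t ht) (hw_pos t ht)) hint hzero).mono fun t ht => ?_)
  linarith

theorem u_left_eq_zero (hs : IsIntegralSolution b u v c d) (hcd : c < d)
    (hmeas : AEStronglyMeasurable b (volume.restrict (Ioo c d)))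
    (hbound : ∀ᵐ x ∂(volume.restrict (Ioo c d)), |b x| ≤ π ^ 2 / (4 * (d - c) ^ 2))
    (hnot : ¬ ∀ᵐ x ∂(volume.restrict (Ioo c d)), b x = π ^ 2 / (4 * (d - c) ^ 2))
    (hvc : v c = 0) (hud : u d = 0) : u c = 0 := by
  wlog hpos : 0 ≤ u c generalizing u v
  · simpa using this hs.neg (by simp [hvc]) (by simp [hud]) (by simp only [Pi.neg_apply]; linarith)
  by_contra hne
  set L := π / (2 * (d - c))
  have hL : L ^ 2 = π ^ 2 / (4 * (d - c) ^ 2) := by rw [div_pow, mul_pow]; norm_num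
  have hLd : L * (d - c) = π / 2 := by simp only [L]; field_simp [(sub_pos.2 hcd).ne']
  have hθ : ∀ x, HasDerivAt (fun x => L * (x - c)) L x := fun x => by
    simpa using ((hasDerivAt_id x).sub_const c).const_mul L
  have hbu := hs.intervalIntegrable_mul hcd.le (by positivity) hmeas hbound
  obtain ⟨e, he, hue⟩ := exists_forall_Icc_pos_of_pos hcd (hs.continuousOn_u hcd.le hbu)
    (lt_of_le_of_ne hpos (Ne.symm hne))
  refine hs.false_of_wronskian_eq_zero hcd hbu (hbound.mono fun x hx => (le_abs_self _).trans hx)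
    hnot (w := fun x => cos (L * (x - c))) (w₁ := fun x => -(L * sin (L * (x - c))))
    (fun x => ((hθ x).cos).congr_deriv (by ring))
    (fun x => (((hθ x).sin).const_mul L).neg.congr_deriv (by rw [← hL]; ring))
    (fun x hx => cos_nonneg_of_mem_Icc ?_) (fun x hx => cos_pos_of_mem_Ioo ?_)
    (by simp [hvc]) (by simp [hLd, hud]) he (hue c ⟨le_rfl, he.1.le⟩).le
    (fun x hx => hue x (Ioc_subset_Icc_self hx))
  · have := mul_sub_mem_Icc_of_mem_Icc hcd hx
    exact ⟨by linarith [this.1, pi_pos], this.2⟩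
  · have := mul_sub_mem_Ioo_of_mem_Ioo hcd hx
    exact ⟨by linarith [this.1, pi_pos], this.2⟩

theorem v_left_eq_zero (hs : IsIntegralSolution b u v c d) (hcd : c < d)
    (hmeas : AEStronglyMeasurable b (volume.restrict (Ioo c d)))
    (hbound : ∀ᵐ x ∂(volume.restrict (Ioo c d)), |b x| ≤ π ^ 2 / (4 * (d - c) ^ 2))
    (hnot : ¬ ∀ᵐ x ∂(volume.restrict (Ioo c d)), b x = π ^ 2 / (4 * (d - c) ^ 2))
    (huc : u c = 0) (hvd : v d = 0) : v c = 0 := by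
  wlog hpos : 0 ≤ v c generalizing u v
  · simpa using this hs.neg (by simp [huc]) (by simp [hvd]) (by simp only [Pi.neg_apply]; linarith)
  by_contra hne
  set L := π / (2 * (d - c))
  have hL : L ^ 2 = π ^ 2 / (4 * (d - c) ^ 2) := by rw [div_pow, mul_pow]; norm_num
  have hLd : L * (d - c) = π / 2 := by simp only [L]; field_simp [(sub_pos.2 hcd).ne']
  have hθ : ∀ x, HasDerivAt (fun x => L * (x - c)) L x := fun x => by
    simpa using ((hasDerivAt_id x).sub_const c).const_mul L
  have hbu := hs.intervalIntegrable_mul hcd.le (by positivity) hmeas hbound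
  have hv := hs.continuousOn_v hcd.le hbu
  obtain ⟨e, he, hve⟩ := exists_forall_Icc_pos_of_pos hcd hv (lt_of_le_of_ne hpos (Ne.symm hne))
  have hue : ∀ x ∈ Ioc c e, 0 < u x := by
    intro x hx
    rw [hs.u_eq x ⟨hx.1.le, hx.2.trans he.2.le⟩, huc, zero_add]
    exact intervalIntegral_pos_of_pos_on
      ((hv.mono (Icc_subset_Icc_right (hx.2.trans he.2.le))).intervalIntegrable_of_Icc hx.1.le)
      (fun t ht => hve t ⟨ht.1.le, ht.2.le.trans hx.2⟩) hx.1
  refine hs.false_of_wronskian_eq_zero hcd hbu (hbound.mono fun x hx => (le_abs_self _).trans hx)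
    hnot (w := fun x => sin (L * (x - c))) (w₁ := fun x => L * cos (L * (x - c)))
    (fun x => ((hθ x).sin).congr_deriv (by ring))
    (fun x => (((hθ x).cos).const_mul L).congr_deriv (by rw [← hL]; ring))
    (fun x hx => sin_nonneg_of_nonneg_of_le_pi (mul_sub_mem_Icc_of_mem_Icc hcd hx).1 ?_)
    (fun x hx => sin_pos_of_pos_of_lt_pi (mul_sub_mem_Ioo_of_mem_Ioo hcd hx).1 ?_)
    (by simp [huc]) (by simp [hLd, hvd]) he huc.ge hue
  · linarith [(mul_sub_mem_Icc_of_mem_Icc hcd hx).2, pi_pos]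
  · linarith [(mul_sub_mem_Ioo_of_mem_Ioo hcd hx).2, pi_pos]

end IsIntegralSolution

/-- L∞ disfocality criterion: if ‖b‖_{L∞(c,d)} ≤ π²/(4(d-c)²) and b is not
a.e. equal to the constant π²/(4(d-c)²), then the only solution of u'' + bu = 0 with
u'(c) = 0, u(d) = 0 is trivial, and likewise for u(c) = 0, u'(d) = 0.
(Solutions are encoded in integral form, v being u'.) -/
theorem disfocality_Linfty (c d : ℝ) (hcd : c < d) (b : ℝ → ℝ)
    (hmeas : AEStronglyMeasurable b (volume.restrict (Ioo c d)))
    (hbound : ∀ᵐ x ∂(volume.restrict (Ioo c d)), |b x| ≤ π ^ 2 / (4 * (d - c) ^ 2))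
    (hnotconst : ¬ (∀ᵐ x ∂(volume.restrict (Ioo c d)), b x = π ^ 2 / (4 * (d - c) ^ 2))) :
    (∀ u v : ℝ → ℝ,
      (∀ x ∈ Icc c d, u x = u c + ∫ t in c..x, v t) →
      (∀ x ∈ Icc c d, v x = - ∫ t in c..x, b t * u t) →
      u d = 0 →
      ∀ x ∈ Icc c d, u x = 0) ∧
    (∀ u v : ℝ → ℝ,
      (∀ x ∈ Icc c d, u x = u c + ∫ t in c..x, v t) →
      (∀ x ∈ Icc c d, v x = v c - ∫ t in c..x, b t * u t) →
      u c = 0 → v d = 0 →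
      ∀ x ∈ Icc c d, u x = 0) := by
  have hk : 0 ≤ π ^ 2 / (4 * (d - c) ^ 2) := by positivity
  refine ⟨fun u v h1 h2 hud => ?_, fun u v h1 h2 huc hvd => ?_⟩
  · have hvc : v c = 0 := by simpa using h2 c (left_mem_Icc.2 hcd.le)
    have hs : IsIntegralSolution b u v c d := ⟨h1, fun x hx => by rw [hvc, zero_sub]; exact h2 x hx⟩
    exact hs.eq_zero_of_left_eq_zero hcd.le hk hmeas hbound
      (hs.u_left_eq_zero hcd hmeas hbound hnotconst hvc hud) hvc
  · have hs : IsIntegralSolution b u v c d := ⟨h1, h2⟩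
    exact hs.eq_zero_of_left_eq_zero hcd.le hk hmeas hbound huc
      (hs.v_left_eq_zero hcd hmeas hbound hnotconst huc hvd)
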